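/- arXiv:2007.13977 — 2 statements merged into one kernel-verified Lean document; each statement's English description precedes it below -/
import Mathlib

section
/- Let M_A = { u_t : t ∈ [0,1] } ⊂ L^2([0,1]) where u_t = indicator of the interval [0, t]. Then there is a constant C > 0 independent of N such that the Kolmogorov N-width satisfies d(N; M_A) ≥ C N^{-1/2} for all N ∈ ℕ. -/
open MeasureTheory

/-- The measure: Lebesgue measure restricted to `[0,1]`. -/
noncomputable def muI : Measure ℝ := volume.restrict (Set.Icc (0 : ℝ) 1)

/-- `u_t`: the indicator of `[0, t]` as an element of `L²([0,1])`. -/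
noncomputable def uAdv (t : ℝ) : Lp ℝ 2 muI :=
  indicatorConstLp 2 (measurableSet_Icc (a := (0 : ℝ)) (b := t))
    (by
      refine ne_of_lt (lt_of_le_of_lt (Measure.restrict_apply_le _ _) ?_)
      exact measure_Icc_lt_top) (1 : ℝ)

/-- Kolmogorov N-width (in `ℝ≥0∞`). -/
noncomputable def kolmogorovWidth {V : Type*} [NormedAddCommGroup V]
    (N : ℕ) (M : Set V) [Module ℝ V] : ENNReal :=
  ⨅ (W : Submodule ℝ V) (_ : Module.finrank ℝ W = N),
    ⨆ u ∈ M, EMetric.infEdist u (W : Set V)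

/-! The increments `u_{(k+1)/2N} - u_{k/2N}`, `k < 2N`, are indicators of disjoint intervals of
length `1/(2N)`, so after scaling by `√(2N)` they form an orthonormal family of size `2N`.
If `P` is the orthogonal projection onto an `N`-dimensional subspace `W`, Bessel's inequality
against an orthonormal basis of `W` gives `∑ₖ ‖P eₖ‖² ≤ N`, hence `∑ₖ ‖eₖ - P eₖ‖² ≥ N` and some
`eₖ` is at distance at least `1/√2` from `W`. The corresponding increment is then at distance at
least `1/(2√N)` from `W`, and since `W` is a subspace one of its two endpoints is at distance at
least `1/(4√N)`. -/

open Metric Module Set Function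
open scoped Pointwise ENNReal

namespace Submodule

variable {E : Type*} [NormedAddCommGroup E] [InnerProductSpace ℝ E] (W : Submodule ℝ E)

lemma infEDist_eq_norm_sub_starProjection [W.HasOrthogonalProjection] (x : E) :
    infEDist x W = ENNReal.ofReal ‖x - W.starProjection x‖ := by
  refine le_antisymm ?_ (le_infEDist.mpr fun v hv => ?_)
  · simpa [edist_dist, dist_eq_norm] using infEDist_le_edist_of_mem (W.starProjection_apply_mem x)
  · rw [edist_dist, dist_eq_norm, W.starProjection_minimal]
    exact ENNReal.ofReal_le_ofReal <|
      ciInf_le ⟨0, by rintro _ ⟨y, rfl⟩; exact norm_nonneg _⟩ (⟨v, hv⟩ : W)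

lemma infEDist_smul (c : ℝ) (x : E) : infEDist (c • x) W = ‖c‖ₑ * infEDist x W := by
  rcases eq_or_ne c 0 with rfl | hc
  · simp [infEDist_zero_of_mem W.zero_mem]
  have hW : c • (W : Set E) = W := by
    ext y
    simp [Set.mem_smul_set_iff_inv_smul_mem₀ hc, W.smul_mem_iff (inv_ne_zero hc)]
  rw [← hW, infEDist_smul₀ hc, hW]
  rfl

lemma infEDist_sub_le (x y : E) : infEDist (x - y) W ≤ infEDist x W + infEDist y W := by
  calc infEDist (x - y) W ≤ ⨅ w ∈ W, ⨅ v ∈ W, edist x v + edist y w :=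
        le_iInf₂ fun w hw => le_iInf₂ fun v hv =>
          (infEDist_le_edist_of_mem (W.sub_mem hv hw)).trans <| by
            simpa [sub_eq_add_neg] using edist_add_add_le x (-y) v (-w)
    _ = infEDist x W + infEDist y W := by
        simp only [infEDist, SetLike.mem_coe, ENNReal.iInf_add, ENNReal.add_iInf]

variable [FiniteDimensional ℝ W]

lemma sum_norm_sq_orthogonalProjectionOnto_le_finrank {ι : Type*} [Fintype ι] {e : ι → E}
    (he : Orthonormal ℝ e) : ∑ i, ‖W.orthogonalProjectionOnto (e i)‖ ^ 2 ≤ finrank ℝ W := by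
  obtain b : OrthonormalBasis (Fin (finrank ℝ W)) ℝ W := stdOrthonormalBasis ℝ W
  calc ∑ i, ‖W.orthogonalProjectionOnto (e i)‖ ^ 2
      = ∑ j, ∑ i, ‖inner ℝ (e i) (b j : E)‖ ^ 2 := by
        rw [Finset.sum_comm]
        refine Finset.sum_congr rfl fun i _ => ?_
        rw [← b.sum_sq_norm_inner_right]
        refine Finset.sum_congr rfl fun j _ => ?_
        rw [inner_orthogonalProjectionOnto_eq_of_mem_left, real_inner_comm]
    _ ≤ ∑ j, ‖(b j : E)‖ ^ 2 := Finset.sum_le_sum fun j _ => he.sum_inner_products_le _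
    _ = finrank ℝ W := by simp [← coe_norm]

lemma exists_orthonormal_le_infEDist {ι : Type*} [Fintype ι] [Nonempty ι] {e : ι → E}
    (he : Orthonormal ℝ e) :
    ∃ i, ENNReal.ofReal √(1 - finrank ℝ W / Fintype.card ι) ≤ infEDist (e i) W := by
  have pythagoras : ∀ i, ‖e i - W.starProjection (e i)‖ ^ 2
      = 1 - ‖W.orthogonalProjectionOnto (e i)‖ ^ 2 := by
    intro i
    have := W.norm_sq_eq_add_norm_sq_starProjection (e i)
    rw [he.1 i, starProjection_orthogonal_val] at this
    simp only [starProjection_apply, coe_norm] at this ⊢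
    linarith
  have hsum : ∑ _i : ι, (1 - finrank ℝ W / Fintype.card ι : ℝ)
      ≤ ∑ i, ‖e i - W.starProjection (e i)‖ ^ 2 := by
    have := W.sum_norm_sq_orthogonalProjectionOnto_le_finrank he
    simp only [pythagoras, Finset.sum_sub_distrib, Finset.sum_const, Finset.card_univ,
      nsmul_eq_mul]
    field_simp
    linarith
  obtain ⟨i, -, hi⟩ := Finset.exists_le_of_sum_le Finset.univ_nonempty hsum
  refine ⟨i, ?_⟩
  rw [W.infEDist_eq_norm_sub_starProjection]
  exact ENNReal.ofReal_le_ofReal (Real.sqrt_le_iff.mpr ⟨norm_nonneg _, hi⟩)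

end Submodule

lemma orthonormal_inv_sqrt_smul_indicatorConstLp {ι α : Type*} [MeasurableSpace α]
    {μ : Measure α} {s : ι → Set α} (hs : ∀ i, MeasurableSet (s i)) (hμ : ∀ i, μ (s i) ≠ ∞)
    (hμ₀ : ∀ i, μ (s i) ≠ 0) (hdisj : Pairwise (Disjoint on s)) :
    Orthonormal ℝ fun i => (√(μ.real (s i)))⁻¹ • indicatorConstLp 2 (hs i) (hμ i) (1 : ℝ) := by
  classical
  rw [orthonormal_iff_ite]
  intro i j
  rw [real_inner_smul_left, real_inner_smul_right,
    L2.real_inner_indicatorConstLp_one_indicatorConstLp_one (hs i) (hs j) (hμ i) (hμ j)]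
  split_ifs with h
  · subst h
    have : 0 < μ.real (s i) := ENNReal.toReal_pos (hμ₀ i) (hμ i)
    rw [inter_self, ← mul_assoc, ← mul_inv, Real.mul_self_sqrt this.le, inv_mul_cancel₀ this.ne']
  · simp [(hdisj h).inter_eq]

instance : IsFiniteMeasure muI := by
  unfold muI
  infer_instance

lemma muI_real_Ioc {a b : ℝ} (ha : 0 ≤ a) (hab : a ≤ b) (hb : b ≤ 1) :
    muI.real (Ioc a b) = b - a := by
  rw [muI, measureReal_restrict_apply measurableSet_Ioc,
    inter_eq_left.mpr (Ioc_subset_Icc_self.trans (Icc_subset_Icc ha hb)),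
    Real.volume_real_Ioc_of_le hab]

lemma uAdv_sub_uAdv {a b : ℝ} (ha : 0 ≤ a) (hab : a ≤ b) :
    uAdv b - uAdv a = indicatorConstLp 2 measurableSet_Ioc (measure_ne_top muI (Ioc a b)) 1 := by
  ext1
  filter_upwards [Lp.coeFn_sub (uAdv b) (uAdv a), indicatorConstLp_coeFn (p := 2) (μ := muI)
    (hs := measurableSet_Icc (a := 0) (b := a)) (hμs := measure_ne_top _ _) (c := (1 : ℝ)),
    indicatorConstLp_coeFn (p := 2) (μ := muI)
    (hs := measurableSet_Icc (a := 0) (b := b)) (hμs := measure_ne_top _ _) (c := (1 : ℝ)),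
    indicatorConstLp_coeFn (p := 2) (μ := muI)
    (hs := measurableSet_Ioc (a := a) (b := b)) (hμs := measure_ne_top _ _) (c := (1 : ℝ))]
    with x hsub h0a h0b hIoc
  rw [hsub, Pi.sub_apply, uAdv, uAdv, h0a, h0b, hIoc, ← Icc_union_Ioc_eq_Icc ha hab,
    indicator_union_of_disjoint]
  · ring
  · exact disjoint_left.mpr fun x hx hx' => hx'.1.not_ge hx.2

lemma pairwise_disjoint_Ioc_div {n : ℝ} (hn : 0 ≤ n) :
    Pairwise (Disjoint on fun k : ℕ => Ioc (k / n) ((k + 1) / n)) := by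
  have hmono : Monotone fun k : ℕ => (k : ℝ) / n := fun _ _ h =>
    div_le_div_of_nonneg_right (Nat.cast_le.mpr h) hn
  simpa [Order.succ_eq_add_one] using hmono.pairwise_disjoint_on_Ioc_succ

lemma exists_le_infEDist_uAdv_sub_uAdv {N : ℕ} (hN : 0 < N) (W : Submodule ℝ (Lp ℝ 2 muI))
    [FiniteDimensional ℝ W] (hW : finrank ℝ W = N) :
    ∃ a ∈ Icc (0 : ℝ) 1, ∃ b ∈ Icc (0 : ℝ) 1,
      ENNReal.ofReal (1 / (2 * √N)) ≤ infEDist (uAdv b - uAdv a) W := by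
  have hn : (0 : ℝ) < 2 * N := by positivity
  set s : Fin (2 * N) → Set ℝ := fun k => Ioc (k / (2 * N)) ((k + 1) / (2 * N))
  have hlt : ∀ k : Fin (2 * N), (k : ℝ) / (2 * N) ≤ (k + 1) / (2 * N) := fun k => by
    gcongr; linarith
  have hle_one : ∀ k : Fin (2 * N), ((k : ℝ) + 1) / (2 * N) ≤ 1 := fun k => by
    rw [div_le_one hn]; exact_mod_cast k.isLt
  have hs : ∀ k, muI.real (s k) = 1 / (2 * N) := fun k => by
    rw [muI_real_Ioc (by positivity) (hlt k) (hle_one k)]; ring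
  have he := orthonormal_inv_sqrt_smul_indicatorConstLp (μ := muI) (s := s)
    (fun _ => measurableSet_Ioc) (fun _ => measure_ne_top _ _)
    (fun k => by rw [← measureReal_ne_zero_iff, hs]; positivity)
    ((pairwise_disjoint_Ioc_div hn.le).comp_of_injective Fin.val_injective)
  simp only [hs] at he
  have : Nonempty (Fin (2 * N)) := ⟨⟨0, by omega⟩⟩
  obtain ⟨k, hk⟩ := W.exists_orthonormal_le_infEDist he
  rw [hW, Fintype.card_fin, Nat.cast_mul, Nat.cast_two] at hk
  refine ⟨k / (2 * N), ⟨by positivity, (hlt k).trans (hle_one k)⟩,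
    (k + 1) / (2 * N), ⟨by positivity, hle_one k⟩, ?_⟩
  have hc : √(1 / (2 * N) : ℝ) ≠ 0 := by positivity
  rw [uAdv_sub_uAdv (by positivity) (hlt k), ← smul_inv_smul₀ hc (indicatorConstLp _ _ _ _),
    W.infEDist_smul]
  calc ENNReal.ofReal (1 / (2 * √N))
      = ‖√(1 / (2 * N) : ℝ)‖ₑ * ENNReal.ofReal √(1 - N / (2 * N)) := by
        rw [Real.enorm_of_nonneg (Real.sqrt_nonneg _), ← ENNReal.ofReal_mul (Real.sqrt_nonneg _),
          ← Real.sqrt_mul (by positivity)]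
        congr 1
        rw [eq_comm, Real.sqrt_eq_iff_mul_self_eq_of_pos (by positivity)]
        field_simp
        rw [Real.sq_sqrt (Nat.cast_nonneg N)]
        ring
    _ ≤ _ := by gcongr

/-- The solution manifold `M_A = {1_{[0,t]} : t ∈ [0,1]}` of
constant-speed advection satisfies `d(N; M_A) ≥ C N^{-1/2}`. -/
theorem stmt6 :
    ∃ C : ℝ, 0 < C ∧ ∀ N : ℕ,
      ENNReal.ofReal (C * (N : ℝ) ^ (-(1 / 2 : ℝ))) ≤
        kolmogorovWidth N {u : Lp ℝ 2 muI | ∃ t ∈ Set.Icc (0 : ℝ) 1, u = uAdv t} := by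
  refine ⟨1 / 4, by norm_num, fun N => ?_⟩
  -- for `N = 0` the left side is `ofReal (1/4 * 0 ^ (-1/2)) = 0`
  rcases N.eq_zero_or_pos with rfl | hN
  · simp
  unfold kolmogorovWidth
  refine le_iInf₂ fun W hW => ?_
  have : FiniteDimensional ℝ W := Module.finite_of_finrank_pos (hW ▸ hN)
  obtain ⟨a, ha, b, hb, hab⟩ := exists_le_infEDist_uAdv_sub_uAdv hN W hW
  set r := ENNReal.ofReal (1 / 4 * (N : ℝ) ^ (-(1 / 2 : ℝ)))
  have hr : ENNReal.ofReal (1 / (2 * √N)) = r + r := by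
    rw [← ENNReal.ofReal_add (by positivity) (by positivity), Real.rpow_neg (Nat.cast_nonneg N),
      ← Real.sqrt_eq_rpow]
    ring_nf
  by_contra! hlt
  have hS : ∀ t ∈ Icc (0 : ℝ) 1, infEDist (uAdv t) W < r := fun t ht =>
    (le_iSup₂_of_le (uAdv t) ⟨t, ht, rfl⟩ le_rfl).trans_lt hlt
  exact (hr ▸ hab).not_gt <|
    (W.infEDist_sub_le _ _).trans_lt (ENNReal.add_lt_add (hS b hb) (hS a ha))
end

section
/- Let c : ℝ → ℝ be continuously differentiable with 0 < c_0 ≤ c(x) for all x. For x_0 ∈ ℝ let X(t, x_0) denote the solution of X' = c(X), X(0,x_0) = x_0, on [0, T]. Then for each t ∈ [0,T], the map x ↦ X(t,x) is differentiable and ∂_x X(t, x_0) = c(X(t,x_0)) / c(x_0); in particular ∂_x X(t, x_0) > 0 and x ↦ X(t,x) is strictly increasing. -/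
/-!
Let `Φ(x) = ∫₀ˣ dy / c(y)` be the travel time of the flow from `0` to `x`. Along a trajectory,
`Φ(X(t, x)) = t + Φ(x)`, because `d/dt Φ(X(t, x)) = c(X) / c(X) = 1`. As `Φ' = 1/c > 0`, `Φ` is a
strictly increasing local diffeomorphism, so `x ↦ X(t, x) = Φ⁻¹(t + Φ(x))` is strictly increasing
with derivative `Φ'(x) / Φ'(X(t, x)) = c(X(t, x)) / c(x)`.
-/

open Topology

theorem HasDerivAt.of_hasStrictDerivAt_comp {𝕜 : Type*} [NontriviallyNormedField 𝕜]
    [CompleteSpace 𝕜] {Φ F : 𝕜 → 𝕜} {φ' d x₀ : 𝕜} (hΦ : HasStrictDerivAt Φ φ' (F x₀))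
    (hφ' : φ' ≠ 0) (hinj : Function.Injective Φ) (hcomp : HasDerivAt (fun x => Φ (F x)) d x₀) :
    HasDerivAt F (φ'⁻¹ * d) x₀ := by
  have hF : ∀ᶠ x in 𝓝 x₀, hΦ.localInverse Φ φ' (F x₀) hφ' (Φ (F x)) = F x := by
    filter_upwards [hcomp.continuousAt.eventually (hΦ.eventually_right_inverse hφ')] with x hx
    exact hinj hx
  exact ((hΦ.to_localInverse hφ').hasDerivAt.comp x₀ hcomp).congr_of_eventuallyEq
    (hF.mono fun _ hx => hx.symm)

noncomputable def timeMap (c : ℝ → ℝ) (x : ℝ) : ℝ :=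
  ∫ y in (0 : ℝ)..x, (c y)⁻¹

section timeMap

variable {c : ℝ → ℝ}

theorem hasStrictDerivAt_timeMap (hc : Continuous c) (hc0 : ∀ x, c x ≠ 0) (x : ℝ) :
    HasStrictDerivAt (timeMap c) (c x)⁻¹ x :=
  have hinv : Continuous fun y => (c y)⁻¹ := hc.inv₀ hc0
  intervalIntegral.integral_hasStrictDerivAt_right (hinv.intervalIntegrable _ _)
    (hinv.stronglyMeasurableAtFilter _ _) hinv.continuousAt

theorem strictMono_timeMap (hc : Continuous c) (hpos : ∀ x, 0 < c x) : StrictMono (timeMap c) :=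
  strictMono_of_hasDerivAt_pos
    (fun x => (hasStrictDerivAt_timeMap hc (fun y => (hpos y).ne') x).hasDerivAt)
    (fun x => inv_pos.2 (hpos x))

theorem timeMap_flow (hc : Continuous c) (hc0 : ∀ x, c x ≠ 0) {T : ℝ} {X : ℝ → ℝ → ℝ}
    (hX0 : ∀ x₀, X 0 x₀ = x₀)
    (hX : ∀ x₀, ∀ t ∈ Set.Icc 0 T, HasDerivAt (fun s => X s x₀) (c (X t x₀)) t)
    (x₀ : ℝ) {t : ℝ} (ht : t ∈ Set.Icc 0 T) :
    timeMap c (X t x₀) = t + timeMap c x₀ := by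
  have hconst : ∀ s ∈ Set.Icc 0 T, HasDerivAt (fun s => timeMap c (X s x₀) - s) 0 s := by
    intro s hs
    have h := ((hasStrictDerivAt_timeMap hc hc0 (X s x₀)).hasDerivAt.comp s (hX x₀ s hs)).sub
      (hasDerivAt_id s)
    rwa [inv_mul_cancel₀ (hc0 _), sub_self] at h
  have h := constant_of_has_deriv_right_zero
    (fun s hs => (hconst s hs).continuousAt.continuousWithinAt)
    (fun s hs => (hconst s (Set.Ico_subset_Icc_self hs)).hasDerivWithinAt) t ht
  simp only [hX0, sub_zero] at h
  linarith

end timeMap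

theorem stmt9_general (c : ℝ → ℝ) (hc : ContDiff ℝ 1 c)
    (c₀ : ℝ) (hc₀ : 0 < c₀) (hlb : ∀ x, c₀ ≤ c x)
    (T : ℝ)
    (X : ℝ → ℝ → ℝ)
    (hX0 : ∀ x₀, X 0 x₀ = x₀)
    (hX : ∀ x₀, ∀ t ∈ Set.Icc 0 T, HasDerivAt (fun s => X s x₀) (c (X t x₀)) t) :
    ∀ t ∈ Set.Icc 0 T, ∀ x₀,
      HasDerivAt (fun x => X t x) (c (X t x₀) / c x₀) x₀ ∧
      0 < c (X t x₀) / c x₀ ∧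
      StrictMono fun x => X t x := by
  intro t ht x₀
  have hpos : ∀ x, 0 < c x := fun x => hc₀.trans_le (hlb x)
  have hc0 : ∀ x, c x ≠ 0 := fun x => (hpos x).ne'
  have hΦmono := strictMono_timeMap hc.continuous hpos
  have hflow : ∀ x, timeMap c (X t x) = t + timeMap c x := fun x =>
    timeMap_flow hc.continuous hc0 hX0 hX x ht
  refine ⟨?_, div_pos (hpos _) (hpos _), fun a b hab => ?_⟩
  · have hcomp : HasDerivAt (fun x => timeMap c (X t x)) (c x₀)⁻¹ x₀ := by
      simpa only [hflow, zero_add] using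
        ((hasStrictDerivAt_timeMap hc.continuous hc0 x₀).hasDerivAt.const_add t)
    simpa only [inv_inv, div_eq_mul_inv] using HasDerivAt.of_hasStrictDerivAt_comp
      (hasStrictDerivAt_timeMap hc.continuous hc0 (X t x₀)) (inv_ne_zero (hc0 _))
      hΦmono.injective hcomp
  · rw [← hΦmono.lt_iff_lt, hflow, hflow]
    exact add_lt_add_right (hΦmono hab) t

/-- for `c` C¹ with `0 < c₀ ≤ c`, the flow `X` of `X' = c(X)`
satisfies `∂ₓ X(t, x₀) = c(X(t,x₀)) / c(x₀) > 0`, and `x ↦ X(t,x)` is strictly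
increasing, for each `t ∈ [0,T]`. -/
theorem stmt9 (c : ℝ → ℝ) (hc : ContDiff ℝ 1 c)
    (c₀ : ℝ) (hc₀ : 0 < c₀) (hlb : ∀ x, c₀ ≤ c x)
    (T : ℝ) (hT : 0 ≤ T)
    (X : ℝ → ℝ → ℝ)
    (hX0 : ∀ x₀, X 0 x₀ = x₀)
    (hX : ∀ x₀, ∀ t ∈ Set.Icc 0 T, HasDerivAt (fun s => X s x₀) (c (X t x₀)) t) :
    ∀ t ∈ Set.Icc 0 T, ∀ x₀,
      HasDerivAt (fun x => X t x) (c (X t x₀) / c x₀) x₀ ∧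
      0 < c (X t x₀) / c x₀ ∧
      StrictMono fun x => X t x :=
  stmt9_general c hc c₀ hc₀ hlb T X hX0 hX
end
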